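/- arXiv:1606.06388 — 5 statements merged into one kernel-verified Lean document; each statement's English description precedes it below -/
import Mathlib

section
/- For all integers k, j ≥ 0 and n, m ≥ 1, the basis functions Ψ_k^n(r,θ) = ((2k+β_n)/(k+β_n))·J_k^{−1,β_n}(2r²−1)·r^{β_n}·sin(nγθ) satisfy the Sobolev orthogonality relation a(Ψ_k^n, Ψ_j^m) = (π/(2γ))·δ_{m,n}·δ_{k,j}·(2k+β_n)·(2−δ_{k,0}), where δ denotes the Kronecker delta. -/
open Real MeasureTheory

/-- Generalized binomial coefficient `C(x,k) = x(x-1)⋯(x-k+1)/k!`. -/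
noncomputable def genBinom (x : ℝ) (k : ℕ) : ℝ :=
  (descPochhammer ℝ k).eval x / (Nat.factorial k : ℝ)

/-- Generalized Jacobi polynomial `J_n^{α,β}(ζ)`. -/
noncomputable def genJacobi (α β : ℝ) (n : ℕ) (ζ : ℝ) : ℝ :=
  ∑ m ∈ Finset.range (n + 1),
    genBinom ((n : ℝ) + α) (n - m) * genBinom ((n : ℝ) + β) m *
      ((ζ - 1) / 2) ^ m * ((ζ + 1) / 2) ^ (n - m)


/-- `β_n = √(c² + γ²n²)`. -/
noncomputable def betaN (γ c : ℝ) (n : ℕ) : ℝ := Real.sqrt (c ^ 2 + γ ^ 2 * (n : ℝ) ^ 2)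


/-- The basis function `Ψ_k^n(r,θ)` on the circular sector. -/
noncomputable def Psi (γ c : ℝ) (k n : ℕ) (r θ : ℝ) : ℝ :=
  ((2 * (k : ℝ) + betaN γ c n) / ((k : ℝ) + betaN γ c n)) *
    genJacobi (-1) (betaN γ c n) k (2 * r ^ 2 - 1) * r ^ (betaN γ c n) *
    Real.sin ((n : ℝ) * γ * θ)

/-!
Write `Ψ_k^n(r, θ) = P_k(r²) r^β sin(nγθ)` with `β = β_n` and
`P_k(t) = ((2k + β)/(k + β)) J_k^{-1,β}(2t - 1)`. The angular integrals are the orthogonality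
relations of `sin(nγθ)` and `cos(nγθ)` on `(0, π/γ)`, which force `m = n`; then
`c² + n²γ² = β²`, and the substitution `t = r²` turns the radial integrals into moments
`∫₀¹ t^(β-1) W(t) dt` of polynomials. With `Q = 2tP' + βP`, so that
`r ∂_r (P(r²) r^β) = Q(r²) r^β`, an integration by parts gives
`∫₀¹ t^(β-1) (Q_k Q_j + β² P_k P_j) dt = 4 ∫₀¹ t^(β+1) P_k' P_j' dt + 2β P_k(1) P_j(1)`,
where `P_k(1) = δ_{k0}` and `P_k' = (2k + β) J_{k-1}^{0,β+1}(2t - 1)`. Finally the shifted Jacobi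
polynomials `J_p^{0,b}(2t - 1)` are orthogonal for the weight `t^b`: expanding them in the basis
`(t - 1)^m t^(p-m)` and evaluating Beta integrals, the moment against `t^s` is, up to a factor,
the `p`-th forward difference of a polynomial of degree `s` in `m`, so it vanishes for `s < p`.
-/

open Polynomial Finset fwdDiff
open scoped Nat

lemma genBinom_eq_choose (x : ℝ) (k : ℕ) : genBinom x k = Ring.choose x k := by
  rw [Ring.choose_eq_smul, ← aeval_eq_smeval, ← eval_map_algebraMap, descPochhammer_map,
    genBinom, smul_eq_mul, div_eq_inv_mul]

lemma choose_mul_factorial_eq_ascPochhammer (x : ℝ) (k : ℕ) :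
    Ring.choose x k * k ! = (ascPochhammer ℝ k).eval (x - k + 1) := by
  rw [← genBinom_eq_choose, genBinom, div_mul_cancel₀ _ (by positivity),
    descPochhammer_eval_eq_ascPochhammer]

lemma Ring.succ_nsmul_choose_succ {R : Type*} [NonAssocRing R] [Pow R ℕ] [BinomialRing R]
    [NatPowAssoc R] (r : R) (k : ℕ) :
    (k + 1) • Ring.choose r (k + 1) = Ring.choose r k * (r - k) := by
  simpa [Nat.choose_succ_self_right, Nat.add_sub_cancel_left, Ring.choose_one_right] using
    Ring.choose_smul_choose r (Nat.le_succ k)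

noncomputable def shiftedJacobi (α β : ℝ) (n : ℕ) : ℝ[X] :=
  ∑ m ∈ range (n + 1),
    C (Ring.choose (n + α) (n - m) * Ring.choose (n + β) m) * ((X - 1) ^ m * X ^ (n - m))

lemma eval_shiftedJacobi (α β : ℝ) (n : ℕ) (t : ℝ) :
    (shiftedJacobi α β n).eval t = genJacobi α β n (2 * t - 1) := by
  simp only [shiftedJacobi, genJacobi, genBinom_eq_choose, eval_finsetSum, eval_mul, eval_C,
    eval_pow, eval_sub, eval_X, eval_one]
  refine sum_congr rfl fun m _ => ?_
  ring_nf

lemma eval_one_shiftedJacobi (α β : ℝ) (n : ℕ) :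
    (shiftedJacobi α β n).eval 1 = Ring.choose (n + α) n := by
  rw [shiftedJacobi, eval_finsetSum, sum_eq_single 0]
  · simp
  · intro m _ hm
    simp [zero_pow hm]
  · simp

lemma natDegree_X_sub_one_pow_mul_X_pow (m e : ℕ) :
    ((X - 1 : ℝ[X]) ^ m * X ^ e).natDegree = m + e := by
  compute_degree!

lemma monic_X_sub_one_pow_mul_X_pow (m e : ℕ) : ((X - 1 : ℝ[X]) ^ m * X ^ e).Monic := by
  monicity!

lemma natDegree_shiftedJacobi_le (α β : ℝ) (n : ℕ) :
    (shiftedJacobi α β n).natDegree ≤ n := by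
  refine natDegree_sum_le_of_forall_le _ _ fun m hm => natDegree_C_mul_le _ _ |>.trans ?_
  rw [natDegree_X_sub_one_pow_mul_X_pow]
  have := mem_range.mp hm
  omega

lemma coeff_shiftedJacobi_self (α β : ℝ) (n : ℕ) :
    (shiftedJacobi α β n).coeff n = Ring.choose (2 * n + α + β) n := by
  have hlead (m : ℕ) (hm : m ≤ n) : ((X - 1 : ℝ[X]) ^ m * X ^ (n - m)).coeff n = 1 := by
    simpa [leadingCoeff, natDegree_X_sub_one_pow_mul_X_pow, Nat.add_sub_cancel' hm] using
      (monic_X_sub_one_pow_mul_X_pow m (n - m)).leadingCoeff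
  rw [shiftedJacobi, finsetSum_coeff,
    sum_congr rfl fun m hm => by rw [coeff_C_mul, hlead m (by simpa [Nat.lt_succ_iff] using hm),
      mul_one],
    show (2 * n + α + β : ℝ) = (n + α) + (n + β) by ring,
    Ring.add_choose_eq n (Commute.all _ _), ← Nat.sum_antidiagonal_swap]
  simp only [Prod.fst_swap, Prod.snd_swap]
  rw [Nat.sum_antidiagonal_eq_sum_range_succ fun i j =>
      Ring.choose ((n : ℝ) + α) j * Ring.choose ((n : ℝ) + β) i]

lemma choose_mul_choose_recurrence (x y : ℝ) {n i : ℕ} (hi : i ≤ n) :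
    (i + 1) * (Ring.choose x (n - i) * Ring.choose y (i + 1))
      + (n + 1 - i : ℕ) * (Ring.choose x (n + 1 - i) * Ring.choose y i)
      = (x + y - n) * (Ring.choose x (n - i) * Ring.choose y i) := by
  have hy := Ring.succ_nsmul_choose_succ y i
  have hx := Ring.succ_nsmul_choose_succ x (n - i)
  rw [Nat.sub_add_comm hi]
  simp only [nsmul_eq_mul, Nat.cast_add, Nat.cast_one, Nat.cast_sub hi] at hx hy ⊢
  linear_combination Ring.choose x (n - i) * hy + Ring.choose y i * hx

lemma derivative_shiftedJacobi_succ (α β : ℝ) (n : ℕ) :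
    derivative (shiftedJacobi α β (n + 1))
      = C (n + α + β + 2) * shiftedJacobi (α + 1) (β + 1) n := by
  set c : ℕ → ℝ := fun m =>
    Ring.choose ((n + 1 : ℕ) + α) (n + 1 - m) * Ring.choose ((n + 1 : ℕ) + β) m
  have hterm (m : ℕ) : derivative (C (c m) * ((X - 1) ^ m * X ^ (n + 1 - m)))
      = C (c m * m) * ((X - 1) ^ (m - 1) * X ^ (n + 1 - m))
        + C (c m * (n + 1 - m : ℕ)) * ((X - 1) ^ m * X ^ (n - m)) := by
    simp only [derivative_mul, derivative_C, derivative_pow, derivative_sub, derivative_X,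
      derivative_one, sub_zero, mul_one, zero_mul, zero_add, C_mul, C_eq_natCast]
    rw [show n + 1 - m - 1 = n - m by omega]
    ring
  rw [shiftedJacobi, derivative_sum, sum_congr rfl fun m _ => hterm m, sum_add_distrib,
    sum_range_succ' _ (n + 1), sum_range_succ _ (n + 1)]
  simp only [Nat.cast_zero, mul_zero, map_zero, zero_mul, add_zero, Nat.sub_self]
  rw [shiftedJacobi, mul_sum, ← sum_add_distrib]
  refine sum_congr rfl fun i hi => ?_
  have hi : i ≤ n := Nat.lt_succ_iff.mp (mem_range.mp hi)
  rw [Nat.add_sub_cancel, show n + 1 - (i + 1) = n - i by omega, ← add_mul, ← C_add,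
    ← mul_assoc (C _) (C _), ← C_mul]
  congr 2
  have := choose_mul_choose_recurrence ((n + 1 : ℕ) + α) ((n + 1 : ℕ) + β) hi
  have hshift (γ : ℝ) : (n : ℝ) + (γ + 1) = (n + 1 : ℕ) + γ := by push_cast; ring
  simp only [c, hshift]
  push_cast at this ⊢
  linear_combination this

/-- The moment functional `W ↦ ∫₀¹ t^(a-1) W(t) dt` (for `0 < a`), defined algebraically by
`X^i ↦ 1 / (a + i)`. -/
noncomputable def powMoment (a : ℝ) : ℝ[X] →ₗ[ℝ] ℝ :=
  lsum fun i => (a + i)⁻¹ • LinearMap.id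

@[simp]
lemma powMoment_monomial (a c : ℝ) (i : ℕ) : powMoment a (monomial i c) = c / (a + i) := by
  simp [powMoment, sum_monomial_index, div_eq_inv_mul]

@[simp]
lemma powMoment_C (a c : ℝ) : powMoment a (C c) = c / a := by
  simpa using powMoment_monomial a c 0

lemma powMoment_X_pow_mul (a : ℝ) (k : ℕ) (W : ℝ[X]) :
    powMoment a (X ^ k * W) = powMoment (a + k) W := by
  induction W using Polynomial.induction_on' with
  | add V W hV hW => rw [mul_add, map_add, map_add, hV, hW]
  | monomial i c =>
    rw [X_pow_mul_monomial, powMoment_monomial, powMoment_monomial]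
    push_cast
    ring_nf

lemma powMoment_X_mul_derivative_add {a : ℝ} (ha : 0 < a) (W : ℝ[X]) :
    powMoment a (X * derivative W) + a * powMoment a W = W.eval 1 := by
  induction W using Polynomial.induction_on' with
  | add V W hV hW =>
    rw [derivative_add, mul_add, map_add, map_add, eval_add, ← hV, ← hW]
    ring
  | monomial i c =>
    cases i with
    | zero => simp [mul_div_cancel₀ _ ha.ne']
    | succ i =>
      have : a + (i + 1) ≠ 0 := by positivity
      rw [derivative_monomial, X_mul_monomial, powMoment_monomial, powMoment_monomial,
        eval_monomial]
      push_cast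
      field_simp
      ring

lemma powMoment_X_sub_one_pow {a : ℝ} (ha : 0 < a) (m : ℕ) :
    powMoment a ((X - 1) ^ m) = (-1) ^ m * m ! / (ascPochhammer ℝ (m + 1)).eval a := by
  induction m generalizing a with
  | zero => simpa using powMoment_C a 1
  | succ m ih =>
    have hsplit : (X - 1 : ℝ[X]) ^ (m + 1) = X ^ 1 * (X - 1) ^ m - (X - 1) ^ m := by ring
    have hshift : (ascPochhammer ℝ (m + 1)).eval a * (a + (m + 1))
        = a * (ascPochhammer ℝ (m + 1)).eval (a + 1) := by
      rw [← Nat.cast_succ, ← ascPochhammer_succ_eval, ascPochhammer_succ_left, eval_mul,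
        eval_comp]
      simp
    have h₀ := (ascPochhammer_pos (m + 1) a ha).ne'
    have h₁ := (ascPochhammer_pos (m + 1) (a + 1) (by positivity)).ne'
    rw [hsplit, map_sub, powMoment_X_pow_mul, ih ha, ih (by positivity), Nat.cast_one,
      ascPochhammer_succ_eval (m + 1) a, Nat.factorial_succ]
    field_simp
    push_cast
    linear_combination (-1) ^ m * (m ! : ℝ) * hshift

lemma intervalIntegrable_rpow_mul_eval_sq {a : ℝ} (ha : 0 < a) (W : ℝ[X]) :
    IntervalIntegrable (fun r => r ^ (a - 1) * W.eval (r ^ 2)) volume 0 1 :=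
  (intervalIntegral.intervalIntegrable_rpow' (by linarith)).mul_continuousOn (by fun_prop)

lemma integral_rpow_mul_eval_sq {a : ℝ} (ha : 0 < a) (W : ℝ[X]) :
    ∫ r in (0 : ℝ)..1, r ^ (a - 1) * W.eval (r ^ 2) = powMoment (a / 2) W / 2 := by
  induction W using Polynomial.induction_on' with
  | add V W hV hW =>
    simp only [eval_add, mul_add]
    rw [intervalIntegral.integral_add (intervalIntegrable_rpow_mul_eval_sq ha V)
      (intervalIntegrable_rpow_mul_eval_sq ha W), hV, hW, map_add, add_div]
  | monomial i c =>
    have hexp : ∀ r ∈ Set.uIoc (0 : ℝ) 1,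
        r ^ (a - 1) * (monomial i c).eval (r ^ 2) = c * r ^ (a + 2 * i - 1) := by
      intro r hr
      rw [Set.uIoc_of_le zero_le_one] at hr
      rw [eval_monomial, ← pow_mul, ← Real.rpow_natCast, mul_left_comm, ← Real.rpow_add hr.1]
      push_cast
      ring_nf
    rw [intervalIntegral.integral_congr_ae (.of_forall hexp), intervalIntegral.integral_const_mul,
      integral_rpow (.inl (by linarith [(Nat.cast_nonneg i : (0 : ℝ) ≤ i)])),
      powMoment_monomial]
    have : a + 2 * i ≠ 0 := by positivity
    rw [sub_add_cancel, Real.one_rpow, Real.zero_rpow (by positivity)]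
    field_simp
    ring

lemma sum_neg_one_pow_mul_choose_eq_fwdDiff_iter {R : Type*} [CommRing R] (f : R → R) (p : ℕ)
    (y : R) :
    ∑ m ∈ range (p + 1), (-1) ^ m * p.choose m * f (y + m) = (-1) ^ p * (Δ_[1])^[p] f y := by
  rw [fwdDiff_iter_eq_sum_shift, mul_sum]
  refine sum_congr rfl fun m hm => ?_
  have hsign : (-1 : R) ^ p * (-1) ^ (p - m) = (-1) ^ m := by
    rw [← pow_add, show p + (p - m) = m + 2 * (p - m) by grind, pow_add, pow_mul, neg_one_sq,
      one_pow, mul_one]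
  rw [zsmul_eq_mul, nsmul_one, ← hsign]
  push_cast
  ring

lemma ascPochhammer_eval_mul_eval_add {S : Type*} [CommSemiring S] (x : S) (n k : ℕ) :
    (ascPochhammer S n).eval x * (ascPochhammer S k).eval (x + n)
      = (ascPochhammer S (n + k)).eval x := by
  rw [← ascPochhammer_mul, eval_mul, eval_comp]
  simp

lemma choose_mul_powMoment_X_pow_mul_X_sub_one_pow {b : ℝ} (hb : -1 < b) {p m : ℕ}
    (hm : m ≤ p) (s : ℕ) :
    Ring.choose (p + b) m * powMoment (b + 1) (X ^ (p - m + s) * (X - 1) ^ m)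
      = (-1) ^ (m + s) * (descPochhammer ℝ s).eval (-(p + b + 1) + m)
        / (ascPochhammer ℝ (s + 1)).eval (p + b + 1) := by
  set c : ℝ := p + b + 1 - m
  have hc : 0 < c := by
    have : (m : ℝ) ≤ p := by exact_mod_cast hm
    simp only [c]
    linarith
  have hcs := (ascPochhammer_pos (m + 1) (c + s) (by positivity)).ne'
  have hcm := (ascPochhammer_pos (s + 1) (c + m) (by positivity)).ne'
  -- `c⁽ᵐ⁾ / (c + s)⁽ᵐ⁺¹⁾ = c⁽ˢ⁾ / (c + m)⁽ˢ⁺¹⁾`, and `c + m = p + b + 1` does not depend on `m`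
  have hprod : (ascPochhammer ℝ m).eval c * (ascPochhammer ℝ (s + 1)).eval (c + m)
      = (ascPochhammer ℝ s).eval c * (ascPochhammer ℝ (m + 1)).eval (c + s) := by
    rw [ascPochhammer_eval_mul_eval_add, ascPochhammer_eval_mul_eval_add,
      show m + (s + 1) = s + (m + 1) by ring]
  have hdesc : (descPochhammer ℝ s).eval (-(p + b + 1) + m)
      = (-1) ^ s * (ascPochhammer ℝ s).eval c := by
    rw [show -(p + b + 1 : ℝ) + m = -c by simp only [c]; ring, ← neg_neg c,
      ascPochhammer_eval_neg_eq_descPochhammer, neg_neg, ← mul_assoc, ← mul_pow, neg_one_mul,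
      neg_neg, one_pow, one_mul]
  have hchoose := choose_mul_factorial_eq_ascPochhammer (p + b) m
  rw [show (p : ℝ) + b - m + 1 = c by simp only [c]; ring] at hchoose
  rw [powMoment_X_pow_mul, powMoment_X_sub_one_pow (by linarith), hdesc,
    show b + 1 + ((p - m + s : ℕ) : ℝ) = c + s by push_cast [hm]; simp only [c]; ring,
    show (p : ℝ) + b + 1 = c + m by simp only [c]; ring]
  have hsign : ((-1 : ℝ) ^ s) ^ 2 = 1 := by rw [← pow_mul, pow_mul', neg_one_sq, one_pow]
  field_simp
  linear_combination (-1) ^ m * (ascPochhammer ℝ (s + 1)).eval (c + m) * hchoose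
    + (-1) ^ m * hprod
    - (-1) ^ m * (ascPochhammer ℝ (m + 1)).eval (c + s) * (ascPochhammer ℝ s).eval c * hsign

lemma powMoment_shiftedJacobi_mul_X_pow {b : ℝ} (hb : -1 < b) (p s : ℕ) :
    powMoment (b + 1) (shiftedJacobi 0 b p * X ^ s)
      = (-1) ^ (p + s) * (Δ_[1])^[p] (descPochhammer ℝ s).eval (-(p + b + 1))
        / (ascPochhammer ℝ (s + 1)).eval (p + b + 1) := by
  have hterm (m : ℕ) (hm : m ≤ p) :
      powMoment (b + 1) (C (Ring.choose ((p : ℝ) + 0) (p - m) * Ring.choose (p + b) m)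
          * ((X - 1) ^ m * X ^ (p - m)) * X ^ s)
        = (-1) ^ s / (ascPochhammer ℝ (s + 1)).eval (p + b + 1)
          * ((-1) ^ m * p.choose m * (descPochhammer ℝ s).eval (-(p + b + 1) + m)) := by
    rw [show C (Ring.choose ((p : ℝ) + 0) (p - m) * Ring.choose (p + b) m)
          * ((X - 1) ^ m * X ^ (p - m)) * X ^ s
        = (Ring.choose ((p : ℝ) + 0) (p - m) * Ring.choose (p + b) m)
          • (X ^ (p - m + s) * (X - 1) ^ m) by rw [smul_eq_C_mul]; ring,
      map_smul, smul_eq_mul, mul_assoc, choose_mul_powMoment_X_pow_mul_X_sub_one_pow hb hm,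
      add_zero, Ring.choose_natCast, Nat.choose_symm hm, pow_add]
    ring
  rw [shiftedJacobi, sum_mul, map_sum, sum_congr rfl fun m hm => hterm m (by grind), ← mul_sum,
    sum_neg_one_pow_mul_choose_eq_fwdDiff_iter (fun x => (descPochhammer ℝ s).eval x)]
  ring

lemma powMoment_shiftedJacobi_mul_X_pow_of_lt {b : ℝ} (hb : -1 < b) {p s : ℕ} (hs : s < p) :
    powMoment (b + 1) (shiftedJacobi 0 b p * X ^ s) = 0 := by
  rw [powMoment_shiftedJacobi_mul_X_pow hb,
    fwdDiff_iter_eq_zero_of_degree_lt ((descPochhammer_natDegree ℝ s).trans_lt hs)]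
  simp

lemma powMoment_shiftedJacobi_mul_X_pow_self {b : ℝ} (hb : -1 < b) (p : ℕ) :
    powMoment (b + 1) (shiftedJacobi 0 b p * X ^ p)
      = p ! / (ascPochhammer ℝ (p + 1)).eval (p + b + 1) := by
  have h := (descPochhammer ℝ p).fwdDiff_iter_degree_eq_factorial
  rw [descPochhammer_natDegree, (monic_descPochhammer ℝ p).leadingCoeff, one_smul] at h
  rw [powMoment_shiftedJacobi_mul_X_pow hb, h, ← two_mul, pow_mul, neg_one_sq, one_pow, one_mul]
  rfl

lemma powMoment_shiftedJacobi_mul_shiftedJacobi {b : ℝ} (hb : -1 < b) (p q : ℕ) :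
    powMoment (b + 1) (shiftedJacobi 0 b p * shiftedJacobi 0 b q)
      = if p = q then (2 * p + b + 1)⁻¹ else 0 := by
  wlog hqp : q ≤ p generalizing p q
  · rw [mul_comm, this q p (by omega), if_neg (by omega), if_neg (by omega)]
  have hexpand : shiftedJacobi 0 b p * shiftedJacobi 0 b q
      = ∑ i ∈ range (q + 1),
          C ((shiftedJacobi 0 b q).coeff i) * (shiftedJacobi 0 b p * X ^ i) := by
    conv_lhs => rw [as_sum_range' _ (q + 1) (Nat.lt_succ_of_le (natDegree_shiftedJacobi_le 0 b q))]
    simp only [mul_sum, ← C_mul_X_pow_eq_monomial]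
    refine sum_congr rfl fun i _ => by ring
  simp only [hexpand, map_sum, ← smul_eq_C_mul, map_smul, smul_eq_mul]
  obtain hlt | rfl := hqp.lt_or_eq
  · rw [if_neg hlt.ne', sum_eq_zero fun i hi => by
      rw [powMoment_shiftedJacobi_mul_X_pow_of_lt hb (by grind), mul_zero]]
  rw [sum_range_succ, sum_eq_zero fun i hi => by
      rw [powMoment_shiftedJacobi_mul_X_pow_of_lt hb (mem_range.mp hi), mul_zero],
    zero_add, if_pos rfl, powMoment_shiftedJacobi_mul_X_pow_self hb, coeff_shiftedJacobi_self,
    ascPochhammer_succ_eval, ← mul_div_assoc, choose_mul_factorial_eq_ascPochhammer]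
  have hA :=
    (ascPochhammer_pos q (q + b + 1 : ℝ) (by linarith [(q.cast_nonneg : (0 : ℝ) ≤ q)])).ne'
  have hB : (2 * q + b + 1 : ℝ) ≠ 0 := by linarith [(q.cast_nonneg : (0 : ℝ) ≤ q)]
  rw [show (2 * q + 0 + b - q + 1 : ℝ) = q + b + 1 by ring,
    show (q + b + 1 + q : ℝ) = 2 * q + b + 1 by ring]
  field_simp

noncomputable def radialProfile (β : ℝ) (k : ℕ) : ℝ[X] :=
  C ((2 * k + β) / (k + β)) * shiftedJacobi (-1) β k

/-- `r (d/dr) (W(r²) r^β) = (eulerDeriv β W)(r²) r^β`. -/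
noncomputable def eulerDeriv (β : ℝ) (W : ℝ[X]) : ℝ[X] :=
  C 2 * (X * derivative W) + C β * W

lemma eval_one_radialProfile {β : ℝ} (hβ : 0 < β) (k : ℕ) :
    (radialProfile β k).eval 1 = if k = 0 then 1 else 0 := by
  rw [radialProfile, eval_mul, eval_C, eval_one_shiftedJacobi]
  cases k with
  | zero => simp [hβ.ne']
  | succ k =>
    rw [show ((k + 1 : ℕ) : ℝ) + -1 = k by push_cast; ring, Ring.choose_natCast,
      Nat.choose_eq_zero_of_lt k.lt_succ_self]
    simp

lemma derivative_radialProfile_zero (β : ℝ) : derivative (radialProfile β 0) = 0 := by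
  simp [radialProfile, shiftedJacobi]

lemma derivative_radialProfile_succ {β : ℝ} (hβ : 0 < β) (k : ℕ) :
    derivative (radialProfile β (k + 1)) = C (2 * (k + 1) + β) * shiftedJacobi 0 (β + 1) k := by
  have : (k + 1 + β : ℝ) ≠ 0 := by positivity
  rw [radialProfile, derivative_C_mul, derivative_shiftedJacobi_succ, ← mul_assoc, ← C_mul,
    show (-1 : ℝ) + 1 = 0 by norm_num]
  congr 2
  push_cast
  field_simp
  ring

lemma powMoment_eulerDeriv_mul_eulerDeriv {β : ℝ} (hβ : 0 < β) (V W : ℝ[X]) :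
    powMoment β (eulerDeriv β V * eulerDeriv β W) + β ^ 2 * powMoment β (V * W)
      = 4 * powMoment (β + 2) (derivative V * derivative W) + 2 * β * (V * W).eval 1 := by
  have hexpand : eulerDeriv β V * eulerDeriv β W
      = (4 : ℝ) • (X ^ 2 * (derivative V * derivative W))
        + (2 * β) • (X * derivative (V * W)) + (β ^ 2) • (V * W) := by
    simp only [eulerDeriv, derivative_mul, smul_eq_C_mul, C_mul, C_pow, C_ofNat]
    ring
  rw [hexpand, map_add, map_add, map_smul, map_smul, map_smul, powMoment_X_pow_mul, smul_eq_mul,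
    smul_eq_mul, smul_eq_mul, ← powMoment_X_mul_derivative_add hβ (V * W)]
  push_cast
  ring

lemma powMoment_eulerDeriv_radialProfile {β : ℝ} (hβ : 0 < β) (k j : ℕ) :
    powMoment β (eulerDeriv β (radialProfile β k) * eulerDeriv β (radialProfile β j))
        + β ^ 2 * powMoment β (radialProfile β k * radialProfile β j)
      = 2 * (if k = j then 1 else 0) * (2 * k + β) * (2 - if k = 0 then 1 else 0) := by
  rw [powMoment_eulerDeriv_mul_eulerDeriv hβ, eval_mul, eval_one_radialProfile hβ,
    eval_one_radialProfile hβ]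
  cases k with
  | zero => cases j <;> norm_num [derivative_radialProfile_zero]
  | succ k =>
    cases j with
    | zero => simp [derivative_radialProfile_zero]
    | succ j =>
      rw [derivative_radialProfile_succ hβ, derivative_radialProfile_succ hβ,
        show C (2 * (k + 1) + β) * shiftedJacobi 0 (β + 1) k
            * (C (2 * (j + 1) + β) * shiftedJacobi 0 (β + 1) j)
          = ((2 * (k + 1) + β) * (2 * (j + 1) + β))
            • (shiftedJacobi 0 (β + 1) k * shiftedJacobi 0 (β + 1) j) by
            rw [smul_eq_C_mul, C_mul]; ring,
        map_smul, show β + 2 = β + 1 + 1 by ring,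
        powMoment_shiftedJacobi_mul_shiftedJacobi (by linarith)]
      have : (2 * k + (β + 1) + 1) ≠ 0 := by positivity
      by_cases hkj : k = j
      · subst hkj
        simp only [if_true, Nat.add_one_ne_zero, if_false, smul_eq_mul]
        push_cast
        field_simp
        ring
      · simp [hkj]

lemma integral_cos_int_mul {γ : ℝ} (hγ : γ ≠ 0) (z : ℤ) :
    ∫ θ in (0 : ℝ)..π / γ, cos (z * γ * θ) = if z = 0 then π / γ else 0 := by
  split_ifs with hz
  · simp [hz]
  have hzγ : (z * γ : ℝ) ≠ 0 := mul_ne_zero (Int.cast_ne_zero.mpr hz) hγ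
  rw [intervalIntegral.integral_comp_mul_left (fun x => cos x) hzγ, integral_cos,
    show z * γ * (π / γ) = z * π by field_simp, sin_int_mul_pi]
  simp

lemma integral_cos_sub_add_mul_cos_add {γ : ℝ} (hγ : γ ≠ 0) {n : ℕ} (hn : n ≠ 0) (m : ℕ)
    (s : ℝ) :
    ∫ θ in (0 : ℝ)..π / γ, (cos ((n - m : ℤ) * γ * θ) + s * cos ((n + m : ℤ) * γ * θ)) / 2
      = if m = n then π / (2 * γ) else 0 := by
  have hcont (z : ℤ) : IntervalIntegrable (fun θ => cos (z * γ * θ)) volume 0 (π / γ) :=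
    (by fun_prop : Continuous fun θ => cos (z * γ * θ)).intervalIntegrable _ _
  rw [intervalIntegral.integral_div,
    intervalIntegral.integral_add (hcont _) ((hcont _).const_mul s),
    intervalIntegral.integral_const_mul, integral_cos_int_mul hγ, integral_cos_int_mul hγ,
    if_neg (show (n + m : ℤ) ≠ 0 by omega)]
  split_ifs with h₁ h₂ h₂
  · field_simp
    ring
  · omega
  · omega
  · simp

lemma integral_sin_mul_sin {γ : ℝ} (hγ : γ ≠ 0) {n : ℕ} (hn : n ≠ 0) (m : ℕ) :
    ∫ θ in (0 : ℝ)..π / γ, sin (n * γ * θ) * sin (m * γ * θ)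
      = if m = n then π / (2 * γ) else 0 := by
  rw [← integral_cos_sub_add_mul_cos_add hγ hn m (-1)]
  refine intervalIntegral.integral_congr fun θ _ => ?_
  push_cast
  rw [sub_mul, sub_mul, add_mul, add_mul, cos_sub, cos_add]
  ring

lemma integral_cos_mul_cos {γ : ℝ} (hγ : γ ≠ 0) {n : ℕ} (hn : n ≠ 0) (m : ℕ) :
    ∫ θ in (0 : ℝ)..π / γ, cos (n * γ * θ) * cos (m * γ * θ)
      = if m = n then π / (2 * γ) else 0 := by
  rw [← integral_cos_sub_add_mul_cos_add hγ hn m 1]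
  refine intervalIntegral.integral_congr fun θ _ => ?_
  push_cast
  rw [sub_mul, sub_mul, add_mul, add_mul, cos_sub, cos_add]
  ring

lemma betaN_pos {γ : ℝ} (hγ : γ ≠ 0) (c : ℝ) {n : ℕ} (hn : n ≠ 0) : 0 < betaN γ c n :=
  Real.sqrt_pos.mpr (by positivity)

lemma betaN_sq (γ c : ℝ) (n : ℕ) : betaN γ c n ^ 2 = c ^ 2 + γ ^ 2 * n ^ 2 :=
  Real.sq_sqrt (by positivity)

lemma Psi_eq_radialProfile (γ c : ℝ) (k n : ℕ) (r θ : ℝ) :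
    Psi γ c k n r θ
      = (radialProfile (betaN γ c n) k).eval (r ^ 2) * r ^ betaN γ c n * sin (n * γ * θ) := by
  rw [Psi, radialProfile, eval_mul, eval_C, eval_shiftedJacobi]

lemma hasDerivAt_eval_sq_mul_rpow (β : ℝ) (W : ℝ[X]) {r : ℝ} (hr : 0 < r) :
    HasDerivAt (fun s => W.eval (s ^ 2) * s ^ β)
      (r ^ (β - 1) * (eulerDeriv β W).eval (r ^ 2)) r := by
  have hW : HasDerivAt (fun s => W.eval (s ^ 2)) ((derivative W).eval (r ^ 2) * (2 * r)) r := by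
    have hsq : HasDerivAt (fun s : ℝ => s ^ 2) (2 * r) r := by simpa using hasDerivAt_pow 2 r
    exact (W.hasDerivAt (r ^ 2)).comp r hsq
  refine (hW.mul (Real.hasDerivAt_rpow_const (.inl hr.ne'))).congr_deriv ?_
  have hr' : r ^ (β - 1) * r = r ^ β := by rw [Real.rpow_sub_one hr.ne']; field_simp
  simp only [eulerDeriv, eval_add, eval_mul, eval_C, eval_X]
  linear_combination (-2 * (derivative W).eval (r ^ 2) * r) * hr'

lemma deriv_Psi_radius (γ c : ℝ) (k n : ℕ) (θ : ℝ) {r : ℝ} (hr : 0 < r) :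
    deriv (fun r' => Psi γ c k n r' θ) r
      = r ^ (betaN γ c n - 1)
        * (eulerDeriv (betaN γ c n) (radialProfile (betaN γ c n) k)).eval (r ^ 2)
        * sin (n * γ * θ) := by
  simp only [Psi_eq_radialProfile]
  exact ((hasDerivAt_eval_sq_mul_rpow _ _ hr).mul_const _).deriv

lemma deriv_Psi_angle (γ c : ℝ) (k n : ℕ) (r θ : ℝ) :
    deriv (fun θ' => Psi γ c k n r θ') θ
      = (radialProfile (betaN γ c n) k).eval (r ^ 2) * r ^ betaN γ c n
        * (n * γ * cos (n * γ * θ)) := by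
  simp only [Psi_eq_radialProfile]
  have hsin : HasDerivAt (fun θ' => sin (n * γ * θ')) (n * γ * cos (n * γ * θ)) θ := by
    simpa [mul_comm] using ((hasDerivAt_id θ).const_mul (n * γ : ℝ)).sin
  exact (hsin.const_mul _).deriv

noncomputable def sobolevIntegrand (γ c : ℝ) (k j n m : ℕ) (r θ : ℝ) : ℝ :=
  (deriv (fun r' => Psi γ c k n r' θ) r * deriv (fun r' => Psi γ c j m r' θ) r
      + r ^ (-2 : ℝ) * deriv (fun θ' => Psi γ c k n r θ') θ * deriv (fun θ' => Psi γ c j m r θ') θ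
      + c ^ 2 * r ^ (-2 : ℝ) * Psi γ c k n r θ * Psi γ c j m r θ) * r

lemma sobolevIntegrand_eq (γ c : ℝ) (k j n m : ℕ) {r : ℝ} (hr : 0 < r) (θ : ℝ) :
    sobolevIntegrand γ c k j n m r θ
      = sin (n * γ * θ) * sin (m * γ * θ)
          * (r ^ (betaN γ c n + betaN γ c m - 1)
            * (eulerDeriv (betaN γ c n) (radialProfile (betaN γ c n) k)
              * eulerDeriv (betaN γ c m) (radialProfile (betaN γ c m) j)).eval (r ^ 2))
        + (c ^ 2 * (sin (n * γ * θ) * sin (m * γ * θ))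
            + n * γ * (m * γ) * (cos (n * γ * θ) * cos (m * γ * θ)))
          * (r ^ (betaN γ c n + betaN γ c m - 1)
            * (radialProfile (betaN γ c n) k * radialProfile (betaN γ c m) j).eval (r ^ 2)) := by
  set βn := betaN γ c n
  set βm := betaN γ c m
  have e₁ : r ^ (βn - 1) * r ^ (βm - 1) * r = r ^ (βn + βm - 1) := by
    rw [← Real.rpow_add hr, ← Real.rpow_add_one hr.ne']
    ring_nf
  have e₂ : r ^ (-2 : ℝ) * (r ^ βn * r ^ βm) * r = r ^ (βn + βm - 1) := by
    rw [← Real.rpow_add hr, ← Real.rpow_add hr, ← Real.rpow_add_one hr.ne']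
    ring_nf
  rw [sobolevIntegrand, deriv_Psi_radius _ _ _ _ _ hr, deriv_Psi_radius _ _ _ _ _ hr,
    deriv_Psi_angle, deriv_Psi_angle, Psi_eq_radialProfile, Psi_eq_radialProfile, eval_mul,
    eval_mul]
  linear_combination
    ((eulerDeriv βn (radialProfile βn k)).eval (r ^ 2)
      * (eulerDeriv βm (radialProfile βm j)).eval (r ^ 2) * sin (n * γ * θ) * sin (m * γ * θ)) * e₁
    + ((radialProfile βn k).eval (r ^ 2) * (radialProfile βm j).eval (r ^ 2)
      * (c ^ 2 * (sin (n * γ * θ) * sin (m * γ * θ))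
        + n * γ * (m * γ) * (cos (n * γ * θ) * cos (m * γ * θ)))) * e₂

lemma integral_sobolevIntegrand (γ c : ℝ) {k j n m : ℕ} (hβn : 0 < betaN γ c n)
    (hβm : 0 < betaN γ c m) (θ : ℝ) :
    ∫ r in (0 : ℝ)..1, sobolevIntegrand γ c k j n m r θ
      = (powMoment ((betaN γ c n + betaN γ c m) / 2)
            (eulerDeriv (betaN γ c n) (radialProfile (betaN γ c n) k)
              * eulerDeriv (betaN γ c m) (radialProfile (betaN γ c m) j))
          + c ^ 2 * powMoment ((betaN γ c n + betaN γ c m) / 2)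
            (radialProfile (betaN γ c n) k * radialProfile (betaN γ c m) j)) / 2
          * (sin (n * γ * θ) * sin (m * γ * θ))
        + n * γ * (m * γ) * powMoment ((betaN γ c n + betaN γ c m) / 2)
            (radialProfile (betaN γ c n) k * radialProfile (betaN γ c m) j) / 2
          * (cos (n * γ * θ) * cos (m * γ * θ)) := by
  have hβ : 0 < betaN γ c n + betaN γ c m := by positivity
  have hpt : ∀ r ∈ Set.uIoc (0 : ℝ) 1, sobolevIntegrand γ c k j n m r θ = _ := fun r hr =>
    sobolevIntegrand_eq γ c k j n m (by rw [Set.uIoc_of_le zero_le_one] at hr; exact hr.1) θ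
  rw [intervalIntegral.integral_congr_ae (.of_forall hpt), intervalIntegral.integral_add
      ((intervalIntegrable_rpow_mul_eval_sq hβ _).const_mul _)
      ((intervalIntegrable_rpow_mul_eval_sq hβ _).const_mul _),
    intervalIntegral.integral_const_mul, intervalIntegral.integral_const_mul,
    integral_rpow_mul_eval_sq hβ, integral_rpow_mul_eval_sq hβ]
  ring

/-- Sobolev orthogonality of the basis functions `Ψ_k^n` on the circular sector:
`a(Ψ_k^n, Ψ_j^m) = (π/(2γ)) δ_{m,n} δ_{k,j} (2k+β_n)(2-δ_{k,0})`. -/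
theorem sector_Psi_sobolev_orthogonality (γ c : ℝ) (hγ : 1 / 2 ≤ γ)
    (k j n m : ℕ) (hn : 1 ≤ n) (hm : 1 ≤ m) :
    (∫ θ in (0:ℝ)..(π / γ), ∫ r in (0:ℝ)..1,
        (deriv (fun r' => Psi γ c k n r' θ) r * deriv (fun r' => Psi γ c j m r' θ) r
          + r ^ (-2 : ℝ) * deriv (fun θ' => Psi γ c k n r θ') θ *
              deriv (fun θ' => Psi γ c j m r θ') θ
          + c ^ 2 * r ^ (-2 : ℝ) * Psi γ c k n r θ * Psi γ c j m r θ) * r)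
      = π / (2 * γ) * (if m = n then 1 else 0) * (if k = j then 1 else 0) *
          (2 * (k : ℝ) + betaN γ c n) * (2 - if k = 0 then 1 else 0) := by
  have hγ₀ : γ ≠ 0 := by positivity
  have hβ (l : ℕ) (hl : 1 ≤ l) : 0 < betaN γ c l := betaN_pos hγ₀ c (by omega)
  have hcont (f : ℝ → ℝ) (hf : Continuous f) (A : ℝ) (l : ℕ) :
      IntervalIntegrable (fun θ => A * (f (n * γ * θ) * f (l * γ * θ))) volume 0 (π / γ) :=
    (by fun_prop : Continuous _).intervalIntegrable _ _
  change ∫ θ in (0 : ℝ)..π / γ, ∫ r in (0 : ℝ)..1, sobolevIntegrand γ c k j n m r θ = _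
  rw [intervalIntegral.integral_congr fun θ _ =>
      integral_sobolevIntegrand γ c (hβ n hn) (hβ m hm) θ,
    intervalIntegral.integral_add (hcont _ continuous_sin _ _) (hcont _ continuous_cos _ _),
    intervalIntegral.integral_const_mul, intervalIntegral.integral_const_mul,
    integral_sin_mul_sin hγ₀ (by omega), integral_cos_mul_cos hγ₀ (by omega)]
  by_cases hmn : m = n
  · subst hmn
    have hradial := powMoment_eulerDeriv_radialProfile (hβ m hm) k j
    simp only [↓reduceIte, add_self_div_two]
    linear_combination π / (4 * γ) * hradial
      - π / (4 * γ)
        * powMoment (betaN γ c m) (radialProfile (betaN γ c m) k * radialProfile (betaN γ c m) j)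
        * betaN_sq γ c m
  · simp [hmn]
end

section
/- Let d be a natural number with d ≥ 3, β ∈ ℝ, and let u, v be continuously differentiable real-valued functions on [0,1]. Then ∫_0^1 (d/dr)(r^{d/2−1−β} u(r)) · (d/dr)(r^{d/2−1−β} v(r)) · r^{2β+1} dr = ∫_0^1 [ r² u'(r) v'(r) + (β² − (d/2−1)²) u(r) v(r) ] r^{d−3} dr + (d/2−1−β) u(1) v(1). -/
/-!
Write `a = d/2 - 1 - β`. For `r > 0` the product rule and `2a + 2β = d - 2` give
`(rᵃu)' (rᵃv)' r^{2β+1} = r^{d-1} u'v' + a² r^{d-3} uv + a r^{d-2} (uv)'`.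
Since `(r^{d-2} uv)' = (d-2) r^{d-3} uv + r^{d-2} (uv)'` and `a² - a(d-2) = β² - (d/2-1)²`,
the integrand is the right-hand integrand plus `a (r^{d-2} uv)'`, whose integral over `[0,1]`
is `a u(1) v(1)` because `r^{d-2}` vanishes at `0`.
-/

open Real MeasureTheory Set intervalIntegral

lemma rpow_mul_rpow_mul_rpow {r x y z w : ℝ} (hr : 0 < r) (h : x + y + z = w) :
    r ^ x * r ^ y * r ^ z = r ^ w := by
  rw [← rpow_add hr, ← rpow_add hr, h]

section Radial

variable {u v u' v' : ℝ → ℝ} {d β : ℝ}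

lemma radial_integrand_eq {r : ℝ} (hr : 0 < r) (hu : HasDerivAt u (u' r) r)
    (hv : HasDerivAt v (v' r) r) :
    deriv (fun s => s ^ (d / 2 - 1 - β) * u s) r *
        deriv (fun s => s ^ (d / 2 - 1 - β) * v s) r * r ^ (2 * β + 1)
      = (r ^ 2 * u' r * v' r + (β ^ 2 - (d / 2 - 1) ^ 2) * u r * v r) * r ^ (d - 3)
        + (d / 2 - 1 - β) *
          ((d - 2) * r ^ (d - 3) * (u r * v r) + r ^ (d - 2) * (u' r * v r + u r * v' r)) := by
  set a := d / 2 - 1 - β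
  have hpow := hasDerivAt_rpow_const (p := a) (Or.inl hr.ne')
  have hdu : HasDerivAt (fun s => s ^ a * u s) (a * r ^ (a - 1) * u r + r ^ a * u' r) r :=
    hpow.mul hu
  have hdv : HasDerivAt (fun s => s ^ a * v s) (a * r ^ (a - 1) * v r + r ^ a * v' r) r :=
    hpow.mul hv
  rw [hdu.deriv, hdv.deriv]
  have e1 : r ^ (a - 1) * r ^ (a - 1) * r ^ (2 * β + 1) = r ^ (d - 3) :=
    rpow_mul_rpow_mul_rpow hr (by ring)
  have e2 : r ^ (a - 1) * r ^ a * r ^ (2 * β + 1) = r ^ (d - 2) :=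
    rpow_mul_rpow_mul_rpow hr (by ring)
  have e3 : r ^ a * r ^ a * r ^ (2 * β + 1) = r ^ 2 * r ^ (d - 3) := by
    rw [rpow_mul_rpow_mul_rpow hr (show a + a + (2 * β + 1) = 2 + (d - 3) by ring),
      rpow_add hr, rpow_two]
  linear_combination (a ^ 2 * (u r * v r)) * e1 + (a * (u r * v' r + u' r * v r)) * e2
    + (u' r * v' r) * e3

lemma continuousOn_deriv_rpow_mul_mul (hd : 3 ≤ d) (hu : ContinuousOn u (Icc 0 1))
    (hv : ContinuousOn v (Icc 0 1)) (hu' : ContinuousOn u' (Icc 0 1))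
    (hv' : ContinuousOn v' (Icc 0 1)) :
    ContinuousOn (fun r : ℝ =>
      (d - 2) * r ^ (d - 3) * (u r * v r) + r ^ (d - 2) * (u' r * v r + u r * v' r)) (Icc 0 1) :=
  ((continuousOn_const.mul (continuous_rpow_const (by linarith)).continuousOn).mul
      (hu.mul hv)).add
    ((continuous_rpow_const (by linarith)).continuousOn.mul ((hu'.mul hv).add (hu.mul hv')))

lemma integral_deriv_rpow_mul_mul (hd : 3 ≤ d) (hu : ContinuousOn u (Icc 0 1))
    (hv : ContinuousOn v (Icc 0 1)) (hu' : ContinuousOn u' (Icc 0 1))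
    (hv' : ContinuousOn v' (Icc 0 1)) (hud : ∀ r ∈ Ioo (0 : ℝ) 1, HasDerivAt u (u' r) r)
    (hvd : ∀ r ∈ Ioo (0 : ℝ) 1, HasDerivAt v (v' r) r) :
    ∫ r in (0 : ℝ)..1,
        (d - 2) * r ^ (d - 3) * (u r * v r) + r ^ (d - 2) * (u' r * v r + u r * v' r)
      = u 1 * v 1 := by
  have hF : ∀ r ∈ Ioo (0 : ℝ) 1, HasDerivAt (fun s => s ^ (d - 2) * (u s * v s))
      ((d - 2) * r ^ (d - 3) * (u r * v r) + r ^ (d - 2) * (u' r * v r + u r * v' r)) r := by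
    intro r hr
    have hrpow := hasDerivAt_rpow_const (p := d - 2) (Or.inl hr.1.ne')
    rw [show d - 2 - 1 = d - 3 by ring] at hrpow
    exact hrpow.mul ((hud r hr).mul (hvd r hr))
  rw [integral_eq_sub_of_hasDerivAt_of_le (f := fun s => s ^ (d - 2) * (u s * v s))
      zero_le_one
      ((continuous_rpow_const (by linarith)).continuousOn.mul (hu.mul hv)) hF
      ((continuousOn_deriv_rpow_mul_mul hd hu hv hu' hv').intervalIntegrable_of_Icc zero_le_one),
    zero_rpow (by linarith), one_rpow]
  ring

theorem radial_integration_by_parts_of_hasDerivAt (hd : 3 ≤ d)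
    (hu : ContinuousOn u (Icc 0 1)) (hv : ContinuousOn v (Icc 0 1))
    (hu' : ContinuousOn u' (Icc 0 1)) (hv' : ContinuousOn v' (Icc 0 1))
    (hud : ∀ r ∈ Ioo (0 : ℝ) 1, HasDerivAt u (u' r) r)
    (hvd : ∀ r ∈ Ioo (0 : ℝ) 1, HasDerivAt v (v' r) r) :
    (∫ r in (0 : ℝ)..1,
        deriv (fun s => s ^ (d / 2 - 1 - β) * u s) r *
          deriv (fun s => s ^ (d / 2 - 1 - β) * v s) r * r ^ (2 * β + 1))
      = (∫ r in (0 : ℝ)..1,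
          (r ^ 2 * u' r * v' r + (β ^ 2 - (d / 2 - 1) ^ 2) * u r * v r) * r ^ (d - 3))
        + (d / 2 - 1 - β) * u 1 * v 1 := by
  have hmain : ContinuousOn (fun r : ℝ =>
      (r ^ 2 * u' r * v' r + (β ^ 2 - (d / 2 - 1) ^ 2) * u r * v r) * r ^ (d - 3)) (Icc 0 1) :=
    ((((continuousOn_pow 2).mul hu').mul hv').add ((continuousOn_const.mul hu).mul hv)).mul
      (continuous_rpow_const (by linarith)).continuousOn
  have hbdry : IntervalIntegrable (fun r : ℝ =>
      (d - 2) * r ^ (d - 3) * (u r * v r) + r ^ (d - 2) * (u' r * v r + u r * v' r)) volume 0 1 :=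
    (continuousOn_deriv_rpow_mul_mul hd hu hv hu' hv').intervalIntegrable_of_Icc zero_le_one
  rw [integral_congr_Ioo_of_le zero_le_one fun r hr =>
      radial_integrand_eq hr.1 (hud r hr) (hvd r hr),
    integral_add (hmain.intervalIntegrable_of_Icc zero_le_one) (hbdry.const_mul _),
    intervalIntegral.integral_const_mul, integral_deriv_rpow_mul_mul hd hu hv hu' hv' hud hvd,
    mul_assoc]

end Radial

/-- Integration-by-parts identity:
`∫₀¹ (r^{d/2-1-β}u)' (r^{d/2-1-β}v)' r^{2β+1} dr
  = ∫₀¹ [r² u' v' + (β² - (d/2-1)²) u v] r^{d-3} dr + (d/2-1-β) u(1) v(1)`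
for `d ≥ 3` and `u, v` continuously differentiable on `[0,1]`. -/
theorem radial_integration_by_parts (d : ℕ) (hd : 3 ≤ d) (β : ℝ) (u v : ℝ → ℝ)
    (hu : ContDiffOn ℝ 1 u (Set.Icc 0 1)) (hv : ContDiffOn ℝ 1 v (Set.Icc 0 1)) :
    (∫ r in (0:ℝ)..1,
        deriv (fun s => s ^ ((d : ℝ) / 2 - 1 - β) * u s) r *
          deriv (fun s => s ^ ((d : ℝ) / 2 - 1 - β) * v s) r * r ^ (2 * β + 1))
      = (∫ r in (0:ℝ)..1,
          (r ^ 2 * deriv u r * deriv v r + (β ^ 2 - ((d : ℝ) / 2 - 1) ^ 2) * u r * v r) *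
            r ^ ((d : ℝ) - 3))
        + ((d : ℝ) / 2 - 1 - β) * u 1 * v 1 := by
  have hIcc : UniqueDiffOn ℝ (Icc (0 : ℝ) 1) := uniqueDiffOn_Icc one_pos
  have hderiv : ∀ w : ℝ → ℝ, ContDiffOn ℝ 1 w (Icc 0 1) → ∀ r ∈ Ioo (0 : ℝ) 1,
      HasDerivAt w (derivWithin w (Icc 0 1) r) r := fun w hw r hr =>
    (hw.differentiableOn one_ne_zero r (Ioo_subset_Icc_self hr)).hasDerivWithinAt.hasDerivAt
      (Icc_mem_nhds hr.1 hr.2)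
  rw [radial_integration_by_parts_of_hasDerivAt (by exact_mod_cast hd) hu.continuousOn
    hv.continuousOn (hu.continuousOn_derivWithin hIcc le_rfl)
    (hv.continuousOn_derivWithin hIcc le_rfl) (hderiv u hu) (hderiv v hv)]
  congr 1
  refine integral_congr_Ioo_of_le zero_le_one fun r hr => ?_
  rw [(hderiv u hu r hr).deriv, (hderiv v hv r hr).deriv]
end

section
/- Let d ∈ ℕ with d ≥ 2, n ∈ ℕ₀, c ∈ ℝ, and set β = √(c² + (n + d/2 − 1)²). If u is a twice differentiable real-valued function on (0,∞), define w on (0,∞) by w(ρ) = ρ^{(d/2−1−β)/2} u(√ρ). Then for every r > 0: −r^{1−d} (d/dr)(r^{d−1} u'(r)) + (c² + n(n+d−2)) r^{−2} u(r) = −4 r^{1−d/2−β} · ( (d/dρ)[ ρ^{β+1} w'(ρ) ] ) evaluated at ρ = r². -/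
/-!
Both sides equal `-u'' - (d-1) r⁻¹ u' + (β² - (d/2-1)²) r⁻² u`. On the right, with
`α = (d/2-1-β)/2` and `m = β + d/2 - 1 = 2(β+α)`, the function `ρ^{β+1} w'(ρ)` is
`ρ^{m/2} h(√ρ)` for `h(s) = α u(s) + s u'(s)/2`, and the prefactor `r^{1-d/2-β} = r^{-m}`
cancels the resulting power of `r`. The two zeroth-order coefficients agree because
`-2αm = β² - (d/2-1)² = c² + n(n+d-2)`.
-/

open Real Set

theorem hasDerivAt_rpow_mul_comp_sqrt {f : ℝ → ℝ} {ρ : ℝ} (e : ℝ) (hρ : 0 < ρ)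
    (hf : DifferentiableAt ℝ f (√ρ)) :
    HasDerivAt (fun t => t ^ e * f (√t))
      (ρ ^ (e - 1) * (e * f (√ρ) + √ρ * deriv f (√ρ) / 2)) ρ := by
  have hsqrt : HasDerivAt (fun t => f (√t)) (deriv f (√ρ) * (1 / (2 * √ρ))) ρ :=
    hf.hasDerivAt.comp ρ (hasDerivAt_sqrt hρ.ne')
  refine ((hasDerivAt_rpow_const (Or.inl hρ.ne')).mul hsqrt).congr_deriv ?_
  rw [rpow_sub_one hρ.ne']
  field_simp
  linear_combination (-deriv f (√ρ)) * mul_self_sqrt hρ.le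

theorem deriv_eq_of_eqOn_rpow_mul_comp_sqrt {w u : ℝ → ℝ} {α ρ : ℝ}
    (hw : EqOn w (fun t => t ^ α * u (√t)) (Ioi 0)) (hρ : 0 < ρ)
    (hu : DifferentiableAt ℝ u (√ρ)) :
    deriv w ρ = ρ ^ (α - 1) * (α * u (√ρ) + √ρ * deriv u (√ρ) / 2) :=
  ((hasDerivAt_rpow_mul_comp_sqrt α hρ hu).congr_of_eventuallyEq
    (Filter.eventuallyEq_of_mem (Ioi_mem_nhds hρ) hw)).deriv

theorem deriv_rpow_mul_deriv_at_sq {w u : ℝ → ℝ} {α γ r : ℝ}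
    (hw : EqOn w (fun t => t ^ α * u (√t)) (Ioi 0))
    (hu : ∀ x ∈ Ioi (0 : ℝ), DifferentiableAt ℝ u x)
    (hu' : DifferentiableAt ℝ (deriv u) r) (hr : 0 < r) :
    deriv (fun ρ => ρ ^ (γ + 1) * deriv w ρ) (r ^ 2)
      = (r ^ 2) ^ (γ + α - 1) * ((γ + α) * (α * u r + r * deriv u r / 2)
          + r * ((α + 1 / 2) * deriv u r + r * deriv (deriv u) r / 2) / 2) := by
  set h : ℝ → ℝ := fun s => α * u s + s * deriv u s / 2
  have hr2 : 0 < r ^ 2 := by positivity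
  have hmerge : EqOn (fun ρ => ρ ^ (γ + 1) * deriv w ρ) (fun ρ => ρ ^ (γ + α) * h (√ρ))
      (Ioi 0) := by
    intro ρ (hρ : 0 < ρ)
    simp only [h, deriv_eq_of_eqOn_rpow_mul_comp_sqrt hw hρ (hu _ (sqrt_pos.2 hρ)), ← mul_assoc,
      ← rpow_add hρ]
    congr 2
    ring
  have hh : HasDerivAt h ((α + 1 / 2) * deriv u r + r * deriv (deriv u) r / 2) r :=
    (((hu r hr).hasDerivAt.const_mul α).fun_add
      (((hasDerivAt_id' r).fun_mul hu'.hasDerivAt).div_const 2)).congr_deriv (by ring)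
  have hderiv := hasDerivAt_rpow_mul_comp_sqrt (γ + α) hr2
    (f := h) (by rw [sqrt_sq hr.le]; exact hh.differentiableAt)
  rw [(hderiv.congr_of_eventuallyEq (Filter.eventuallyEq_of_mem (Ioi_mem_nhds hr2) hmerge)).deriv,
    sqrt_sq hr.le, hh.deriv]

theorem rpow_neg_mul_deriv_rpow_mul_deriv {u : ℝ → ℝ} {r : ℝ} (a : ℝ) (hr : 0 < r)
    (hu' : DifferentiableAt ℝ (deriv u) r) :
    r ^ (-a) * deriv (fun s => s ^ a * deriv u s) r
      = a * r⁻¹ * deriv u r + deriv (deriv u) r := by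
  have h : HasDerivAt (fun s => s ^ a * deriv u s)
      (a * r ^ (a - 1) * deriv u r + r ^ a * deriv (deriv u) r) r :=
    (hasDerivAt_rpow_const (Or.inl hr.ne')).mul hu'.hasDerivAt
  rw [h.deriv, rpow_sub_one hr.ne', rpow_neg hr.le]
  field_simp

theorem radial_operator_merge_rho_general (d : ℕ) (n : ℕ) (c : ℝ) (β : ℝ)
    (hβ : β = Real.sqrt (c ^ 2 + ((n : ℝ) + (d : ℝ) / 2 - 1) ^ 2))
    (u : ℝ → ℝ)
    (hu : ∀ x ∈ Set.Ioi (0:ℝ), DifferentiableAt ℝ u x)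
    (hu' : ∀ x ∈ Set.Ioi (0:ℝ), DifferentiableAt ℝ (deriv u) x)
    (w : ℝ → ℝ)
    (hw : ∀ ρ ∈ Set.Ioi (0:ℝ), w ρ = ρ ^ (((d : ℝ) / 2 - 1 - β) / 2) * u (Real.sqrt ρ))
    (r : ℝ) (hr : 0 < r) :
    -r ^ (1 - (d : ℝ)) * deriv (fun s => s ^ ((d : ℝ) - 1) * deriv u s) r
      + (c ^ 2 + (n : ℝ) * ((n : ℝ) + (d : ℝ) - 2)) * r ^ (-2 : ℝ) * u r
    = -4 * r ^ (1 - (d : ℝ) / 2 - β) *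
        deriv (fun ρ => ρ ^ (β + 1) * deriv w ρ) (r ^ 2) := by
  set α : ℝ := ((d : ℝ) / 2 - 1 - β) / 2
  have hβ2 : β ^ 2 = c ^ 2 + ((n : ℝ) + (d : ℝ) / 2 - 1) ^ 2 := by
    rw [hβ]; exact sq_sqrt (by positivity)
  have hpow : r ^ (1 - (d : ℝ) / 2 - β) * (r ^ 2) ^ (β + α - 1) = (r ^ 2)⁻¹ := by
    rw [← rpow_natCast r 2, ← rpow_mul hr.le, ← rpow_add hr, ← rpow_neg hr.le]
    congr 1
    push_cast
    ring
  have hLHS := rpow_neg_mul_deriv_rpow_mul_deriv ((d : ℝ) - 1) hr (hu' r hr)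
  rw [neg_sub] at hLHS
  rw [neg_mul, hLHS, deriv_rpow_mul_deriv_at_sq hw hu (hu' r hr) hr, ← mul_assoc, mul_assoc (-4),
    hpow, rpow_neg hr.le, rpow_two]
  field_simp
  linear_combination (-4 * u r) * hβ2

/-- Pointwise identity for the radial Schrödinger operator in the variable `ρ = r²`:
`-r^{1-d}(r^{d-1}u')' + (c²+n(n+d-2))r^{-2} u
  = -4 r^{1-d/2-β} (ρ^{β+1} w')'|_{ρ=r²}`,
where `β = √(c² + (n+d/2-1)²)` and `w(ρ) = ρ^{(d/2-1-β)/2} u(√ρ)`. -/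
theorem radial_operator_merge_rho (d : ℕ) (hd : 2 ≤ d) (n : ℕ) (c : ℝ) (β : ℝ)
    (hβ : β = Real.sqrt (c ^ 2 + ((n : ℝ) + (d : ℝ) / 2 - 1) ^ 2))
    (u : ℝ → ℝ)
    (hu : ∀ x ∈ Set.Ioi (0:ℝ), DifferentiableAt ℝ u x)
    (hu' : ∀ x ∈ Set.Ioi (0:ℝ), DifferentiableAt ℝ (deriv u) x)
    (w : ℝ → ℝ)
    (hw : ∀ ρ ∈ Set.Ioi (0:ℝ), w ρ = ρ ^ (((d : ℝ) / 2 - 1 - β) / 2) * u (Real.sqrt ρ))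
    (r : ℝ) (hr : 0 < r) :
    -r ^ (1 - (d : ℝ)) * deriv (fun s => s ^ ((d : ℝ) - 1) * deriv u s) r
      + (c ^ 2 + (n : ℝ) * ((n : ℝ) + (d : ℝ) - 2)) * r ^ (-2 : ℝ) * u r
    = -4 * r ^ (1 - (d : ℝ) / 2 - β) *
        deriv (fun ρ => ρ ^ (β + 1) * deriv w ρ) (r ^ 2) :=
  radial_operator_merge_rho_general d n c β hβ u hu hu' w hw r hr
end

section
/- For every real β > −1, every integer k ≥ 2, and every ζ ∈ ℝ: ((2k+β)/(k+β)) J_k^{−1,β}(ζ) = ((k+β+1)/(2k+β+1)) J_k^{0,β+1}(ζ) − ((1+β)(2k+β)/((2k+β−1)(2k+β+1))) J_{k−1}^{0,β+1}(ζ) − ((k−1)/(2k+β−1)) J_{k−2}^{0,β+1}(ζ). -/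
open Real MeasureTheory

/-!
The polynomial `J_k^{-1,β}` is reduced to `J^{0,β}` by the contiguity relation in `α`, and each
`J^{0,β}` is then expanded into `J^{0,β+1}` by the contiguity relation in `β`; the three-term
formula is the resulting rational identity in `k` and `β`.

Both contiguity relations are checked coefficientwise on the homogeneous form of `J_n` in
`x = (ζ-1)/2` and `y = (ζ+1)/2`. The polynomial of degree `n` is lifted to degree `n+1` by
multiplying with `y - x = 1`, Pascal's rule gives the lifted coefficients in closed form, and the
remaining coefficient identities follow from the absorption identity
`x * C(x-1, k) = (x - k) * C(x, k)`.
-/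

open Finset

@[simp]
lemma genBinom_zero_right (x : ℝ) : genBinom x 0 = 1 := by
  simp [genBinom]

lemma succ_mul_genBinom_succ (x : ℝ) (k : ℕ) :
    ((k : ℝ) + 1) * genBinom x (k + 1) = x * genBinom (x - 1) k := by
  simp only [genBinom, descPochhammer_succ_left, Polynomial.eval_mul, Polynomial.eval_X,
    Polynomial.eval_comp, Polynomial.eval_sub, Polynomial.eval_one, Nat.factorial_succ]
  push_cast
  field_simp

lemma succ_mul_genBinom_succ' (x : ℝ) (k : ℕ) :
    ((k : ℝ) + 1) * genBinom x (k + 1) = (x - k) * genBinom x k := by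
  simp only [genBinom, descPochhammer_succ_eval, Nat.factorial_succ]
  push_cast
  field_simp

lemma mul_genBinom_sub_one (x : ℝ) (k : ℕ) :
    x * genBinom (x - 1) k = (x - k) * genBinom x k := by
  rw [← succ_mul_genBinom_succ, succ_mul_genBinom_succ']

lemma genBinom_succ_succ (x : ℝ) (k : ℕ) :
    genBinom (x + 1) (k + 1) = genBinom x k + genBinom x (k + 1) := by
  have hk : (k : ℝ) + 1 ≠ 0 := by positivity
  apply mul_left_cancel₀ hk
  rw [mul_add, succ_mul_genBinom_succ, add_sub_cancel_right, succ_mul_genBinom_succ']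
  ring

lemma sub_mul_sum_antidiagonal (a b x y : ℝ) (N : ℕ) :
    (y - x) * ∑ p ∈ antidiagonal N, genBinom b p.1 * genBinom a p.2 * x ^ p.1 * y ^ p.2
      = ∑ p ∈ antidiagonal (N + 1),
          (genBinom b p.1 * genBinom (a + 1) p.2 - genBinom (b + 1) p.1 * genBinom a p.2) *
            x ^ p.1 * y ^ p.2 := by
  have hsplit : ∀ p : ℕ × ℕ,
      (genBinom b p.1 * genBinom (a + 1) p.2 - genBinom (b + 1) p.1 * genBinom a p.2) *
          x ^ p.1 * y ^ p.2
        = genBinom b p.1 * (genBinom (a + 1) p.2 - genBinom a p.2) * x ^ p.1 * y ^ p.2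
          - (genBinom (b + 1) p.1 - genBinom b p.1) * genBinom a p.2 * x ^ p.1 * y ^ p.2 :=
    fun p => by ring
  -- `C(a+1, i) - C(a, i)` vanishes at `i = 0` and is `C(a, i-1)` otherwise, so the two shifts
  -- of the antidiagonal leave no boundary terms.
  simp only [hsplit, sum_sub_distrib]
  rw [Nat.sum_antidiagonal_succ', Nat.sum_antidiagonal_succ]
  simp only [genBinom_succ_succ, genBinom_zero_right, add_sub_cancel_right, sub_self, mul_zero,
    zero_mul, zero_add, mul_sum, sub_mul, ← sum_sub_distrib]
  refine sum_congr rfl fun p _ => ?_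
  ring

lemma genJacobi_eq_sum_antidiagonal (α β : ℝ) (n : ℕ) (ζ : ℝ) :
    genJacobi α β n ζ = ∑ p ∈ antidiagonal n,
      genBinom (n + β) p.1 * genBinom (n + α) p.2 * ((ζ - 1) / 2) ^ p.1 * ((ζ + 1) / 2) ^ p.2 := by
  rw [Nat.sum_antidiagonal_eq_sum_range_succ_mk, genJacobi]
  refine sum_congr rfl fun m _ => ?_
  ring

lemma genJacobi_eq_sum_antidiagonal_succ (α β : ℝ) (n : ℕ) (ζ : ℝ) :
    genJacobi α β n ζ = ∑ p ∈ antidiagonal (n + 1),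
      (genBinom (n + β) p.1 * genBinom (n + α + 1) p.2
        - genBinom (n + β + 1) p.1 * genBinom (n + α) p.2) *
          ((ζ - 1) / 2) ^ p.1 * ((ζ + 1) / 2) ^ p.2 := by
  rw [← sub_mul_sum_antidiagonal, ← genJacobi_eq_sum_antidiagonal]
  ring

lemma genBinom_contiguous_alpha (a b : ℝ) (i j : ℕ) :
    (a + b + 2) * (genBinom (b + 1) j * genBinom a i)
      = (a + b + 2 - (i + j)) * (genBinom (b + 1) j * genBinom (a + 1) i)
        - (b + 1) * (genBinom b j * genBinom (a + 1) i - genBinom (b + 1) j * genBinom a i) := by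
  have ha := mul_genBinom_sub_one (a + 1) i
  have hb := mul_genBinom_sub_one (b + 1) j
  rw [add_sub_cancel_right] at ha hb
  linear_combination genBinom (b + 1) j * ha + genBinom (a + 1) i * hb

lemma genBinom_contiguous_beta (a b : ℝ) (i j : ℕ) :
    (a + b + 2) * (genBinom b j * genBinom (a + 1) i)
      = (a + b + 2 - (i + j)) * (genBinom (b + 1) j * genBinom (a + 1) i)
        + (a + 1) * (genBinom b j * genBinom (a + 1) i - genBinom (b + 1) j * genBinom a i) := by
  have ha := mul_genBinom_sub_one (a + 1) i
  have hb := mul_genBinom_sub_one (b + 1) j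
  rw [add_sub_cancel_right] at ha hb
  linear_combination genBinom (b + 1) j * ha + genBinom (a + 1) i * hb

lemma genJacobi_contiguous_alpha (α β : ℝ) (n : ℕ) (ζ : ℝ) :
    (2 * ((n : ℝ) + 1) + α + β) * genJacobi (α - 1) β (n + 1) ζ
      = ((n : ℝ) + 1 + α + β) * genJacobi α β (n + 1) ζ
        - ((n : ℝ) + 1 + β) * genJacobi α β n ζ := by
  rw [genJacobi_eq_sum_antidiagonal, genJacobi_eq_sum_antidiagonal,
    genJacobi_eq_sum_antidiagonal_succ, mul_sum, mul_sum, mul_sum, ← sum_sub_distrib]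
  refine sum_congr rfl fun p hp => ?_
  have hij : (p.2 : ℝ) + p.1 = n + 1 := by
    rw [add_comm]; exact_mod_cast mem_antidiagonal.mp hp
  push_cast
  rw [show (n : ℝ) + 1 + (α - 1) = n + α by ring, show (n : ℝ) + 1 + α = n + α + 1 by ring,
    show (n : ℝ) + 1 + β = n + β + 1 by ring]
  linear_combination ((ζ - 1) / 2) ^ p.1 * ((ζ + 1) / 2) ^ p.2 *
    (genBinom_contiguous_alpha (n + α) (n + β) p.2 p.1
      - genBinom ((n : ℝ) + β + 1) p.1 * genBinom ((n : ℝ) + α + 1) p.2 * hij)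

lemma genJacobi_contiguous_beta (α β : ℝ) (n : ℕ) (ζ : ℝ) :
    (2 * ((n : ℝ) + 1) + α + β + 1) * genJacobi α β (n + 1) ζ
      = ((n : ℝ) + 1 + α + β + 1) * genJacobi α (β + 1) (n + 1) ζ
        + ((n : ℝ) + 1 + α) * genJacobi α (β + 1) n ζ := by
  rw [genJacobi_eq_sum_antidiagonal, genJacobi_eq_sum_antidiagonal,
    genJacobi_eq_sum_antidiagonal_succ, mul_sum, mul_sum, mul_sum, ← sum_add_distrib]
  refine sum_congr rfl fun p hp => ?_
  have hij : (p.2 : ℝ) + p.1 = n + 1 := by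
    rw [add_comm]; exact_mod_cast mem_antidiagonal.mp hp
  push_cast
  rw [show (n : ℝ) + 1 + (β + 1) = n + 1 + β + 1 by ring,
    show (n : ℝ) + (β + 1) = n + 1 + β by ring, show (n : ℝ) + 1 + α = n + α + 1 by ring]
  linear_combination ((ζ - 1) / 2) ^ p.1 * ((ζ + 1) / 2) ^ p.2 *
    (genBinom_contiguous_beta (n + α) (n + 1 + β) p.2 p.1
      - genBinom ((n : ℝ) + 1 + β + 1) p.1 * genBinom ((n : ℝ) + α + 1) p.2 * hij)

/-- The three-term expansion of `((2k+β)/(k+β)) J_k^{-1,β}` in terms of `J^{0,β+1}`. -/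
theorem genJacobi_m1_three_term (β : ℝ) (hβ : -1 < β) (k : ℕ) (hk : 2 ≤ k) (ζ : ℝ) :
    (2 * (k : ℝ) + β) / ((k : ℝ) + β) * genJacobi (-1) β k ζ
      = ((k : ℝ) + β + 1) / (2 * (k : ℝ) + β + 1) * genJacobi 0 (β + 1) k ζ
        - (1 + β) * (2 * (k : ℝ) + β) / ((2 * (k : ℝ) + β - 1) * (2 * (k : ℝ) + β + 1)) *
            genJacobi 0 (β + 1) (k - 1) ζ
        - ((k : ℝ) - 1) / (2 * (k : ℝ) + β - 1) * genJacobi 0 (β + 1) (k - 2) ζ := by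
  obtain ⟨n, rfl⟩ : ∃ n, k = n + 2 := ⟨k - 2, by omega⟩
  have hα := genJacobi_contiguous_alpha 0 β (n + 1) ζ
  have hβ₁ := genJacobi_contiguous_beta 0 β (n + 1) ζ
  have hβ₀ := genJacobi_contiguous_beta 0 β n ζ
  simp only [zero_sub, add_zero, Nat.cast_add, Nat.cast_one, add_assoc, one_add_one_eq_two]
    at hα hβ₁ hβ₀
  simp only [Nat.add_sub_cancel, show n + 2 - 1 = n + 1 by omega, Nat.cast_add, Nat.cast_ofNat]
  have hn : (0 : ℝ) ≤ n := n.cast_nonneg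
  have h₁ : (n : ℝ) + 2 + β ≠ 0 := by linarith
  have h₂ : 2 * ((n : ℝ) + 2) + β + 1 ≠ 0 := by linarith
  have h₃ : 2 * ((n : ℝ) + 2) + β - 1 ≠ 0 := by linarith
  have e₁ : (2 * ((n : ℝ) + 2) + β) / ((n : ℝ) + 2 + β) * genJacobi (-1) β (n + 2) ζ
      = genJacobi 0 β (n + 2) ζ - genJacobi 0 β (n + 1) ζ := by
    field_simp
    linear_combination hα
  have e₂ : genJacobi 0 β (n + 2) ζ
      = (((n : ℝ) + 2 + β + 1) * genJacobi 0 (β + 1) (n + 2) ζ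
          + ((n : ℝ) + 2) * genJacobi 0 (β + 1) (n + 1) ζ) / (2 * ((n : ℝ) + 2) + β + 1) := by
    field_simp
    linear_combination hβ₁
  have e₃ : genJacobi 0 β (n + 1) ζ
      = (((n : ℝ) + 2 + β) * genJacobi 0 (β + 1) (n + 1) ζ
          + ((n : ℝ) + 1) * genJacobi 0 (β + 1) n ζ) / (2 * ((n : ℝ) + 2) + β - 1) := by
    field_simp
    linear_combination hβ₀
  rw [e₁, e₂, e₃]
  field_simp
  ring
end

section
/- For every real α > −1, every integer n ≥ 1, and every ζ ∈ ℝ: J_n^{−1,α}(ζ) = ((n+α)/n) · ((ζ−1)/2) · J_{n−1}^{1,α}(ζ). -/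
open Real MeasureTheory

lemma genBinom_nat (N k : ℕ) : genBinom (N : ℝ) k = (N.choose k : ℝ) := by
  unfold genBinom
  rw [descPochhammer_eval_eq_descFactorial, Nat.descFactorial_eq_factorial_mul_choose]
  push_cast
  rw [mul_comm, mul_div_assoc, div_self (by positivity), mul_one]

lemma genBinom_succ (x : ℝ) (k : ℕ) :
    genBinom x (k + 1) = x / (k + 1) * genBinom (x - 1) k := by
  unfold genBinom
  rw [descPochhammer_succ_left, Polynomial.eval_mul, Polynomial.eval_X,
    Polynomial.eval_comp, Polynomial.eval_sub, Polynomial.eval_X, Polynomial.eval_one,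
    Nat.factorial_succ]
  push_cast
  field_simp

/-- `J_n^{-1,α}(ζ) = ((n+α)/n) ((ζ-1)/2) J_{n-1}^{1,α}(ζ)` for `n ≥ 1`. -/
theorem genJacobi_m1_factor (α : ℝ) (hα : -1 < α) (n : ℕ) (hn : 1 ≤ n) (ζ : ℝ) :
    genJacobi (-1) α n ζ
      = ((n : ℝ) + α) / (n : ℝ) * ((ζ - 1) / 2) * genJacobi 1 α (n - 1) ζ := by
  obtain ⟨p, rfl⟩ : ∃ p, n = p + 1 := ⟨n - 1, (Nat.succ_pred_eq_of_pos hn).symm⟩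
  unfold genJacobi
  simp only [Nat.add_sub_cancel]
  rw [Finset.sum_range_succ', Finset.mul_sum]
  have h0 : genBinom ((↑(p + 1) : ℝ) + -1) (p + 1 - 0) = 0 := by
    have : ((p + 1 : ℕ) : ℝ) + -1 = (p : ℝ) := by push_cast; ring
    rw [this]
    simp [genBinom_nat p (p + 1), Nat.choose_eq_zero_of_lt (Nat.lt_succ_self p)]
  rw [h0]
  simp only [zero_mul, mul_zero, add_zero]
  apply Finset.sum_congr rfl
  intro m hm
  have hmp : m ≤ p := Nat.lt_succ_iff.mp (Finset.mem_range.mp hm)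
  have e1 : p + 1 - (m + 1) = p - m := by omega
  have e2 : ((p + 1 : ℕ) : ℝ) + -1 = (p : ℝ) := by push_cast; ring
  rw [e1, e2, genBinom_nat p (p - m)]
  have e3 : ((p + 1 : ℕ) : ℝ) + α = ((p : ℝ) + α) + 1 := by push_cast; ring
  rw [e3, genBinom_succ, add_sub_cancel_right]
  have e4 : ((p : ℝ) + 1) = ((p + 1 : ℕ) : ℝ) := by push_cast; ring
  rw [e4, genBinom_nat (p + 1) (p - m)]
  have key : ((p : ℝ) + 1) * (p.choose (p - m) : ℝ)
      = ((m : ℝ) + 1) * ((p + 1).choose (p - m) : ℝ) := by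
    have h1 : p.choose (p - m) = p.choose m := Nat.choose_symm hmp
    have h2 : (p + 1).choose (p - m) = (p + 1).choose (m + 1) := by
      rw [← Nat.choose_symm (by omega : m + 1 ≤ p + 1)]
      congr 1
      omega
    rw [h1, h2]
    have h3 := congrArg (Nat.cast (R := ℝ)) (Nat.add_one_mul_choose_eq p m)
    push_cast at h3
    linarith
  have hm1 : ((m : ℝ) + 1) ≠ 0 := by positivity
  have hp1 : ((p : ℝ) + 1) ≠ 0 := by positivity
  have hcast : ((p + 1 : ℕ) : ℝ) = (p : ℝ) + 1 := by push_cast; ring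
  have hC1 : (p.choose (p - m) : ℝ) = ((m : ℝ) + 1) * ((p + 1).choose (p - m) : ℝ) / ((p : ℝ) + 1) := by
    rw [Nat.choose_symm hmp] at key ⊢
    field_simp
    linarith [key]
  rw [hcast, pow_succ, hC1]
  field_simp
end
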